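/- Fix an integer N ≥ 2 and a real number q with 0 < q < 1. Let n ∈ {1, −1}, let m be an integer with |m| > 1, and let λ be a rational number such that either 2λ ∈ ℤ, or uλ ∈ ℤ for some positive divisor u of m or of m+n. Set s = q^{−Nλ} and t = q^{−Nn(1−λm)}. Then s^m t^n = q^{−N}, and for every x ∈ ℂ \ {0} at which all theta factors occurring are nonzero, Y_{m,n}(x;s,t) = 1. -/

import Mathlib

/-- Infinite `q`-Pochhammer symbol `(z;p)_∞ = ∏_{j≥0} (1 − z pʲ)`. -/
noncomputable def qPoch (z p : ℂ) : ℂ := ∏' j : ℕ, (1 - z * p ^ j)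

/-- Jacobi Θ function `Θ_p(z) = (z;p)_∞ (p z⁻¹;p)_∞ (p;p)_∞`. -/
noncomputable def ThetaF (p z : ℂ) : ℂ := qPoch z p * qPoch (p * z⁻¹) p * qPoch p p

/-- The function
`U(z) = q^{2/N−2} · Θ_{q^{2N}}(q²z²) Θ_{q^{2N}}(q²z⁻²) / (Θ_{q^{2N}}(z²) Θ_{q^{2N}}(z⁻²))`. -/
noncomputable def Ufun (N : ℕ) (q : ℝ) (z : ℂ) : ℂ :=
  ((q ^ ((2 : ℝ) / N - 2) : ℝ) : ℂ) *
    (ThetaF ((q : ℂ) ^ (2 * N)) ((q : ℂ) ^ 2 * z ^ 2) *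
      ThetaF ((q : ℂ) ^ (2 * N)) ((q : ℂ) ^ 2 * z⁻¹ ^ 2)) /
    (ThetaF ((q : ℂ) ^ (2 * N)) (z ^ 2) * ThetaF ((q : ℂ) ^ (2 * N)) (z⁻¹ ^ 2))

/-- All four theta factors occurring in `U(z)` are nonzero. -/
def thetaReg (N : ℕ) (q : ℝ) (z : ℂ) : Prop :=
  ThetaF ((q : ℂ) ^ (2 * N)) ((q : ℂ) ^ 2 * z ^ 2) ≠ 0 ∧
  ThetaF ((q : ℂ) ^ (2 * N)) ((q : ℂ) ^ 2 * z⁻¹ ^ 2) ≠ 0 ∧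
  ThetaF ((q : ℂ) ^ (2 * N)) (z ^ 2) ≠ 0 ∧
  ThetaF ((q : ℂ) ^ (2 * N)) (z⁻¹ ^ 2) ≠ 0

/-- `F_a(x;s) = ∏_{k=0}^{a−1} U(sᵏx)` for `a > 0`, `F₀ = 1`, and
`F_a(x;s) = ∏_{k=1}^{−a} U(s⁻ᵏx)⁻¹` for `a < 0`. -/
noncomputable def Ffun (N : ℕ) (q : ℝ) (s x : ℂ) (a : ℤ) : ℂ :=
  if 0 < a then ∏ k ∈ Finset.range a.toNat, Ufun N q (s ^ (k : ℕ) * x)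
  else ∏ k ∈ Finset.range (-a).toNat, (Ufun N q (s ^ (-(k : ℤ) - 1) * x))⁻¹

/-- The structure function
`Y_{m,n}(x;s,t) = F_n(x;t) F_{−n}(x;t) / (F_m(x;s) F_{−m}(x;s))`. -/
noncomputable def Yfun (N : ℕ) (q : ℝ) (s t x : ℂ) (m n : ℤ) : ℂ :=
  Ffun N q t x n * Ffun N q t x (-n) / (Ffun N q s x m * Ffun N q s x (-m))

/-!
Theta quasi-periodicity `Θ_p(pz) = -z⁻¹ Θ_p(z)` makes `U` invariant under `z ↦ q^N z`: the
factors produced in the numerator and the denominator of `U` coincide. If `uλ ∈ ℤ` then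
`s^u ∈ q^{Nℤ}`, so `f k = U(sᵏx)` is `u`-periodic in `k ∈ ℤ`; moreover `t⁻¹ ∈ q^{Nℤ} s^{nm}`.
Hence `Y_{m,n} = 1` amounts to `f 0 ∏_{k=1}^{|m|} f(-k) = f(nm) ∏_{k=0}^{|m|-1} f k`, and both
cases `nm = ±|m|` reduce to `∏_{k=0}^{c} f(-k) = ∏_{k=0}^{c} f k`, which holds by reflecting
`k ↦ c - k` (or `k ↦ c + 1 - k`) as soon as `f` has period `c` (or `c + 1`). The hypotheses on
`λ` provide such a period `u ∣ nm` or `u ∣ nm + 1`.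
-/

open Finset Function

lemma multipliable_one_sub_mul_pow (z : ℂ) {p : ℂ} (hp : ‖p‖ < 1) :
    Multipliable fun j : ℕ => 1 - z * p ^ j := by
  simpa only [sub_eq_add_neg] using
    Complex.multipliable_one_add_of_summable ((summable_geometric_of_norm_lt_one hp).mul_left z).neg

lemma qPoch_eq_one_sub_mul (z : ℂ) {p : ℂ} (hp : ‖p‖ < 1) :
    qPoch z p = (1 - z) * qPoch (p * z) p := by
  have hm : Multipliable fun j : ℕ => 1 - z * p ^ (j + 1) :=
    (multipliable_one_sub_mul_pow (p * z) hp).congr fun j => by ring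
  have h : ∏' j : ℕ, (1 - z * p ^ j) = (1 - z * p ^ 0) * ∏' j : ℕ, (1 - z * p ^ (j + 1)) :=
    tprod_eq_zero_mul' hm
  rw [qPoch, h, pow_zero, mul_one, qPoch]
  exact congrArg _ (tprod_congr fun j => by ring)

section Theta

variable {p : ℂ}

lemma ThetaF_mul_self (hp : ‖p‖ < 1) (hp0 : p ≠ 0) {z : ℂ} (hz : z ≠ 0) :
    ThetaF p (p * z) = -z⁻¹ * ThetaF p z := by
  rw [ThetaF, ThetaF, show p * (p * z)⁻¹ = z⁻¹ by field_simp, qPoch_eq_one_sub_mul z⁻¹ hp,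
    qPoch_eq_one_sub_mul z hp, show (1 : ℂ) - z⁻¹ = -z⁻¹ * (1 - z) by field_simp; ring]
  ring

lemma ThetaF_inv_mul (hp : ‖p‖ < 1) (hp0 : p ≠ 0) {z : ℂ} (hz : z ≠ 0) :
    ThetaF p (p⁻¹ * z) = -(p⁻¹ * z) * ThetaF p z := by
  have h := ThetaF_mul_self hp hp0 (mul_ne_zero (inv_ne_zero hp0) hz)
  rw [mul_inv_cancel_left₀ hp0] at h
  rw [h]
  field_simp

lemma ThetaF_mul_self_mul_ThetaF_inv_mul (hp : ‖p‖ < 1) (hp0 : p ≠ 0) {a b : ℂ} (ha : a ≠ 0)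
    (hb : b ≠ 0) :
    ThetaF p (p * a) * ThetaF p (p⁻¹ * b) = p⁻¹ * b / a * (ThetaF p a * ThetaF p b) := by
  rw [ThetaF_mul_self hp hp0 ha, ThetaF_inv_mul hp hp0 hb]
  ring

end Theta

lemma apply_zpow_mul_eq {G β : Type*} [GroupWithZero G] {g : G → β} {a : G} (ha : a ≠ 0)
    (hg : ∀ z, g (a * z) = g z) (k : ℤ) (z : G) : g (a ^ k * z) = g z := by
  induction k using Int.induction_on with
  | zero => simp
  | succ i ih => rw [add_comm, zpow_one_add₀ ha, mul_assoc, hg, ih]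
  | pred i ih => rw [← ih, ← hg, ← mul_assoc, ← zpow_one_add₀ ha, add_sub_cancel]

section Ufun

variable {N : ℕ} {q : ℝ}

lemma Ufun_pow_mul (hq0 : 0 < q) (hq1 : q < 1) (z : ℂ) :
    Ufun N q ((q : ℂ) ^ N * z) = Ufun N q z := by
  rcases N.eq_zero_or_pos with rfl | hN
  · rw [pow_zero, one_mul]
  rcases eq_or_ne z 0 with rfl | hz
  · rw [mul_zero]
  have hq : (q : ℂ) ≠ 0 := Complex.ofReal_ne_zero.mpr hq0.ne'
  set p : ℂ := (q : ℂ) ^ (2 * N)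
  have hp0 : p ≠ 0 := pow_ne_zero _ hq
  have hp : ‖p‖ < 1 := by
    rw [norm_pow, Complex.norm_real, Real.norm_of_nonneg hq0.le]
    exact pow_lt_one₀ hq0.le hq1 (by omega)
  have hsq : ((q : ℂ) ^ N) ^ 2 = p := by rw [← pow_mul, mul_comm]
  have e₁ : (q : ℂ) ^ 2 * ((q : ℂ) ^ N * z) ^ 2 = p * ((q : ℂ) ^ 2 * z ^ 2) := by
    rw [← hsq]; ring
  have e₂ : (q : ℂ) ^ 2 * ((q : ℂ) ^ N * z)⁻¹ ^ 2 = p⁻¹ * ((q : ℂ) ^ 2 * z⁻¹ ^ 2) := by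
    rw [← hsq]; field_simp
  have e₃ : ((q : ℂ) ^ N * z) ^ 2 = p * z ^ 2 := by rw [← hsq]; ring
  have e₄ : ((q : ℂ) ^ N * z)⁻¹ ^ 2 = p⁻¹ * z⁻¹ ^ 2 := by rw [← hsq]; field_simp
  have hfactor :
      p⁻¹ * ((q : ℂ) ^ 2 * z⁻¹ ^ 2) / ((q : ℂ) ^ 2 * z ^ 2) = p⁻¹ * z⁻¹ ^ 2 / z ^ 2 := by
    field_simp
  rw [Ufun, Ufun, e₁, e₂, e₃, e₄, ThetaF_mul_self_mul_ThetaF_inv_mul hp hp0 (by positivity)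
    (by positivity), ThetaF_mul_self_mul_ThetaF_inv_mul hp hp0 (by positivity) (by positivity),
    hfactor, mul_left_comm, mul_div_mul_left _ _ (by positivity)]

lemma Ufun_zpow_mul (hq0 : 0 < q) (hq1 : q < 1) (k : ℤ) (z : ℂ) :
    Ufun N q (((q : ℂ) ^ N) ^ k * z) = Ufun N q z :=
  apply_zpow_mul_eq (pow_ne_zero _ (Complex.ofReal_ne_zero.mpr hq0.ne'))
    (Ufun_pow_mul hq0 hq1) k z

lemma Ufun_ne_zero (hq0 : 0 < q) {z : ℂ} (h : thetaReg N q z) : Ufun N q z ≠ 0 := by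
  obtain ⟨h₁, h₂, h₃, h₄⟩ := h
  have hC : ((q ^ ((2 : ℝ) / N - 2) : ℝ) : ℂ) ≠ 0 :=
    Complex.ofReal_ne_zero.mpr (Real.rpow_pos_of_pos hq0 _).ne'
  exact div_ne_zero (mul_ne_zero hC (mul_ne_zero h₁ h₂)) (mul_ne_zero h₃ h₄)

end Ufun

section Products

variable {M : Type*} [CommMonoid M] {f : ℤ → M}

lemma prod_range_succ_neg_of_periodic {c : ℕ} (hf : Periodic f c) :
    ∏ k ∈ range (c + 1), f (-k) = ∏ k ∈ range (c + 1), f k := by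
  rw [← prod_range_reflect (fun k : ℕ => f k)]
  refine prod_congr rfl fun k hk => ?_
  have hk : k ≤ c := Nat.lt_succ_iff.mp (mem_range.mp hk)
  rw [← hf, Nat.add_sub_cancel, Nat.cast_sub hk]
  ring_nf

lemma prod_range_succ_neg_of_periodic_succ {c : ℕ} (hf : Periodic f (c + 1)) :
    ∏ k ∈ range (c + 1), f (-k) = ∏ k ∈ range (c + 1), f k := by
  calc ∏ k ∈ range (c + 1), f (-k)
      = ∏ k ∈ range (c + 1), f ((c - k : ℕ) + 1) := prod_congr rfl fun k hk => by
        have hk : k ≤ c := Nat.lt_succ_iff.mp (mem_range.mp hk)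
        rw [← hf, Nat.cast_sub hk]
        ring_nf
    _ = ∏ k ∈ range (c + 1), f (k + 1) := prod_range_reflect (fun k : ℕ => f (k + 1)) (c + 1)
    _ = ∏ k ∈ range (c + 1), f k := by
        rw [prod_range_succ, prod_range_succ' (fun k : ℕ => f k), Nat.cast_zero,
          ← hf 0, zero_add]
        push_cast
        rfl

lemma mul_prod_range_neg_eq_of_periodic {u e : ℤ} (hf : Periodic f u) (hu : u ∣ e ∨ u ∣ e + 1) :
    f 0 * ∏ k ∈ range e.natAbs, f (-(k : ℤ) - 1) = f e * ∏ k ∈ range e.natAbs, f k := by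
  have hrefl : ∀ c : ℕ, u ∣ c ∨ u ∣ c + 1 →
      ∏ k ∈ range (c + 1), f (-k) = ∏ k ∈ range (c + 1), f k := by
    rintro c (⟨v, hv⟩ | ⟨v, hv⟩)
    · exact prod_range_succ_neg_of_periodic (by rw [hv, mul_comm]; exact hf.int_mul v)
    · exact prod_range_succ_neg_of_periodic_succ (by rw [hv, mul_comm]; exact hf.int_mul v)
  have hshift : ∀ c : ℕ,
      f 0 * ∏ k ∈ range c, f (-(k : ℤ) - 1) = ∏ k ∈ range (c + 1), f (-k) := by
    intro c
    rw [prod_range_succ', mul_comm]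
    push_cast
    simp only [neg_add', neg_zero]
  obtain ⟨c, rfl | rfl⟩ := Int.eq_nat_or_neg e
  · rw [Int.natAbs_natCast, hshift, hrefl c hu, prod_range_succ, mul_comm]
  · rcases c with _ | c
    · simp
    have hu' : u ∣ c ∨ u ∣ c + 1 := by
      rw [show -((c + 1 : ℕ) : ℤ) + 1 = -c by push_cast; ring, Nat.cast_succ, dvd_neg,
        dvd_neg] at hu
      exact hu.symm
    rw [Int.natAbs_neg, Int.natAbs_natCast, prod_range_succ, ← mul_assoc, hshift, hrefl c hu',
      mul_comm, Nat.cast_succ, neg_add']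

end Products

lemma Ffun_mul_Ffun_neg (N : ℕ) (q : ℝ) (s x : ℂ) (a : ℤ) :
    Ffun N q s x a * Ffun N q s x (-a) =
      (∏ k ∈ range a.natAbs, Ufun N q (s ^ (k : ℤ) * x)) /
        ∏ k ∈ range a.natAbs, Ufun N q (s ^ (-(k : ℤ) - 1) * x) := by
  simp only [Ffun, zpow_natCast, neg_neg, prod_inv_distrib]
  rcases lt_trichotomy a 0 with ha | rfl | ha
  · rw [if_neg ha.not_gt, if_pos (neg_pos.mpr ha), show (-a).toNat = a.natAbs by omega,
      div_eq_mul_inv, mul_comm]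
  · simp
  · rw [if_pos ha, if_neg (by omega), show a.toNat = a.natAbs by omega, div_eq_mul_inv]

section Powers

variable {q : ℝ}

lemma ofReal_rpow_zpow (hq0 : 0 < q) (a : ℝ) (k : ℤ) :
    ((q ^ a : ℝ) : ℂ) ^ k = ((q ^ (a * k) : ℝ) : ℂ) := by
  rw [← Complex.ofReal_zpow, ← Real.rpow_intCast, ← Real.rpow_mul hq0.le]

lemma ofReal_rpow_natCast_mul_intCast (hq0 : 0 < q) (N : ℕ) (k : ℤ) :
    ((q ^ ((N : ℝ) * k) : ℝ) : ℂ) = ((q : ℂ) ^ N) ^ k := by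
  rw [Real.rpow_mul hq0.le, Real.rpow_natCast, Real.rpow_intCast, Complex.ofReal_zpow,
    Complex.ofReal_pow]

lemma ofReal_rpow_zpow_of_mul_eq (hq0 : 0 < q) (N : ℕ) {l : ℚ} {u i : ℤ}
    (hi : (u : ℚ) * l = i) :
    ((q ^ (-(N : ℝ) * l) : ℝ) : ℂ) ^ u = ((q : ℂ) ^ N) ^ (-i) := by
  have hi' : (u : ℝ) * l = i := by exact_mod_cast hi
  rw [ofReal_rpow_zpow hq0, ← ofReal_rpow_natCast_mul_intCast hq0]
  congr 2
  push_cast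
  linear_combination (-(N : ℝ)) * hi'

lemma ofReal_rpow_eq_zpow_mul_zpow (hq0 : 0 < q) (N : ℕ) (l : ℚ) (m n : ℤ) :
    ((q ^ (-(N : ℝ) * n * (1 - l * m)) : ℝ) : ℂ) =
      ((q : ℂ) ^ N) ^ (-n) * ((q ^ (-(N : ℝ) * l) : ℝ) : ℂ) ^ (-(n * m)) := by
  rw [ofReal_rpow_zpow hq0, ← ofReal_rpow_natCast_mul_intCast hq0, ← Complex.ofReal_mul,
    ← Real.rpow_add hq0]
  congr 2
  push_cast
  ring

end Powers

lemma zpow_mul_zpow_eq_inv {G : Type*} [CommGroupWithZero G] {Q s t : G} {m n : ℤ}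
    (hn : n = 1 ∨ n = -1) (hs : s ≠ 0) (ht : t = Q ^ (-n) * s ^ (-(n * m))) :
    s ^ m * t ^ n = Q⁻¹ := by
  have hsm : s ^ m ≠ 0 := zpow_ne_zero m hs
  rcases hn with rfl | rfl <;> simp only [ht, one_mul, neg_mul, neg_neg, zpow_neg, zpow_one] <;>
    field_simp

lemma Yfun_eq_one {N : ℕ} {q : ℝ} (hq0 : 0 < q) (hq1 : q < 1) {s t x : ℂ} {m n u : ℤ}
    (hn : n = 1 ∨ n = -1) (ht : t = ((q : ℂ) ^ N) ^ (-n) * s ^ (-(n * m)))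
    (hper : Periodic (fun k : ℤ => Ufun N q (s ^ k * x)) u) (hu : u ∣ n * m ∨ u ∣ n * m + 1)
    (hreg : ∀ k : ℤ, |k| ≤ |m| → Ufun N q (s ^ k * x) ≠ 0) :
    Yfun N q s t x m n = 1 := by
  set f : ℤ → ℂ := fun k => Ufun N q (s ^ k * x)
  have hnat : (n * m).natAbs = m.natAbs := by rcases hn with rfl | rfl <;> simp
  have ht_inv : t ^ (-1 : ℤ) = ((q : ℂ) ^ N) ^ n * s ^ (n * m) := by
    rw [ht, mul_zpow, ← zpow_mul, ← zpow_mul, mul_neg_one, mul_neg_one, neg_neg, neg_neg]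
  have hnum : Ffun N q t x n * Ffun N q t x (-n) = f 0 / f (n * m) := by
    rw [Ffun_mul_Ffun_neg, show n.natAbs = 1 by rcases hn with rfl | rfl <;> rfl]
    simp only [prod_range_one, Nat.cast_zero, neg_zero, zero_sub, zpow_zero, ht_inv, mul_assoc,
      Ufun_zpow_mul hq0 hq1, f]
  have hreg' : ∀ k : ℤ, k.natAbs ≤ m.natAbs → f k ≠ 0 := fun k hk =>
    hreg k (by rw [Int.abs_eq_natAbs, Int.abs_eq_natAbs]; exact_mod_cast hk)
  have hP : ∏ k ∈ range m.natAbs, f k ≠ 0 :=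
    prod_ne_zero_iff.mpr fun k hk => hreg' k (by have := mem_range.mp hk; omega)
  have hQ : ∏ k ∈ range m.natAbs, f (-(k : ℤ) - 1) ≠ 0 :=
    prod_ne_zero_iff.mpr fun k hk => hreg' _ (by have := mem_range.mp hk; omega)
  have he : f (n * m) ≠ 0 := hreg' _ hnat.le
  rw [Yfun, hnum, Ffun_mul_Ffun_neg, div_eq_one_iff_eq (div_ne_zero hP hQ), div_eq_div_iff he hQ,
    ← hnat, mul_prod_range_neg_eq_of_periodic hper hu, hnat, mul_comm]

theorem Yfun_abelian_n_one_general (N : ℕ) (q : ℝ) (hq0 : 0 < q) (hq1 : q < 1)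
    (m n : ℤ) (hn : n = 1 ∨ n = -1) (l : ℚ)
    (hl : (∃ k : ℤ, 2 * l = (k : ℚ)) ∨
          (∃ u : ℤ, 0 < u ∧ (u ∣ m ∨ u ∣ (m + n)) ∧ ∃ k : ℤ, (u : ℚ) * l = (k : ℚ)))
    (s t : ℂ)
    (hsdef : s = ((q ^ (-(N : ℝ) * (l : ℝ)) : ℝ) : ℂ))
    (htdef : t = ((q ^ (-(N : ℝ) * (n : ℝ) * (1 - (l : ℝ) * (m : ℝ))) : ℝ) : ℂ)) :
    s ^ m * t ^ n = (q : ℂ) ^ (-(N : ℤ)) ∧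
    ∀ x : ℂ, x ≠ 0 →
      (∀ k : ℤ, |k| ≤ |m| → thetaReg N q (s ^ k * x)) →
      (∀ k : ℤ, |k| ≤ |n| → thetaReg N q (t ^ k * x)) →
      Yfun N q s t x m n = 1 := by
  have hs : s ≠ 0 := hsdef ▸ Complex.ofReal_ne_zero.mpr (Real.rpow_pos_of_pos hq0 _).ne'
  have ht : t = ((q : ℂ) ^ N) ^ (-n) * s ^ (-(n * m)) :=
    hsdef ▸ htdef ▸ ofReal_rpow_eq_zpow_mul_zpow hq0 N l m n
  refine ⟨by rw [zpow_mul_zpow_eq_inv hn hs ht, zpow_neg, zpow_natCast], fun x _ hS _ => ?_⟩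
  obtain ⟨u, ⟨i, hi⟩, hu⟩ :
      ∃ u : ℤ, (∃ i : ℤ, (u : ℚ) * l = i) ∧ (u ∣ n * m ∨ u ∣ n * m + 1) := by
    rcases hl with ⟨i, hi⟩ | ⟨u, -, hdvd, hi⟩
    · refine ⟨2, ⟨i, by exact_mod_cast hi⟩, ?_⟩
      rcases Int.even_or_odd (n * m) with ⟨r, hr⟩ | ⟨r, hr⟩
      · exact Or.inl ⟨r, by omega⟩
      · exact Or.inr ⟨r + 1, by omega⟩
    · have hmn : n * m + 1 = n * (m + n) := by rcases hn with rfl | rfl <;> ring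
      exact ⟨u, hi, hdvd.imp (Dvd.dvd.mul_left · n) fun h => hmn ▸ h.mul_left n⟩
  have hsu : s ^ u = ((q : ℂ) ^ N) ^ (-i) := hsdef ▸ ofReal_rpow_zpow_of_mul_eq hq0 N hi
  refine Yfun_eq_one hq0 hq1 hn ht (fun k => ?_) hu fun k hk => Ufun_ne_zero hq0 (hS k hk)
  simp only [zpow_add₀ hs, mul_comm (s ^ k), hsu, mul_assoc, Ufun_zpow_mul hq0 hq1]

/-- Abelianity for `|n| = 1, |m| > 1`: with `λ ∈ ℚ` such that `2λ ∈ ℤ` or `uλ ∈ ℤ`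
for some positive divisor `u` of `m` or of `m+n`, `s = q^{−Nλ}` and
`t = q^{−Nn(1−λm)}`, the surface condition `s^m t^n = q^{−N}` holds and
`Y_{m,n}(x;s,t) = 1` at every nonzero `x` where all theta factors occurring are
nonzero. -/
theorem Yfun_abelian_n_one (N : ℕ) (hN : 2 ≤ N) (q : ℝ) (hq0 : 0 < q) (hq1 : q < 1)
    (m n : ℤ) (hn : n = 1 ∨ n = -1) (hm : 1 < |m|) (l : ℚ)
    (hl : (∃ k : ℤ, 2 * l = (k : ℚ)) ∨
          (∃ u : ℤ, 0 < u ∧ (u ∣ m ∨ u ∣ (m + n)) ∧ ∃ k : ℤ, (u : ℚ) * l = (k : ℚ)))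
    (s t : ℂ)
    (hsdef : s = ((q ^ (-(N : ℝ) * (l : ℝ)) : ℝ) : ℂ))
    (htdef : t = ((q ^ (-(N : ℝ) * (n : ℝ) * (1 - (l : ℝ) * (m : ℝ))) : ℝ) : ℂ)) :
    s ^ m * t ^ n = (q : ℂ) ^ (-(N : ℤ)) ∧
    ∀ x : ℂ, x ≠ 0 →
      (∀ k : ℤ, |k| ≤ |m| → thetaReg N q (s ^ k * x)) →
      (∀ k : ℤ, |k| ≤ |n| → thetaReg N q (t ^ k * x)) →
      Yfun N q s t x m n = 1 :=
  Yfun_abelian_n_one_general N q hq0 hq1 m n hn l hl s t hsdef htdef
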